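/- arXiv:2104.01025 — 4 statements merged into one kernel-verified Lean document; each statement's English description precedes it below -/
import Mathlib

section
/- If a/l = s/t with s,t positive coprime integers and t not divisible by 4, then there exists δ > 0 such that |sin(πka/l + 3π/4)| ≥ δ for all positive integers k. -/
open Real

theorem stmt3 (a l : ℝ) (s t : ℕ) (hs : 0 < s) (ht : 0 < t)
    (hcop : Nat.Coprime s t) (h4 : ¬ (4 ∣ t)) (hal : a / l = (s : ℝ) / t) :
    ∃ δ > (0 : ℝ), ∀ k : ℕ, 0 < k → δ ≤ |Real.sin (π * k * (a / l) + 3 * π / 4)| := by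
  rw [hal]
  have htR : (t : ℝ) ≠ 0 := Nat.cast_ne_zero.mpr ht.ne'
  have hπ : (0:ℝ) < π := Real.pi_pos
  have key : ∀ k : ℕ, Real.sin (π * k * ((s:ℝ)/t) + 3 * π / 4) ≠ 0 := by
    intro k h
    rw [Real.sin_eq_zero_iff] at h
    obtain ⟨n, hn⟩ := h
    have h2 : (4*n*t : ℝ) = 4*k*s + 3*t := by
      field_simp at hn
      nlinarith [hn]
    have h3 : (4*n*t : ℤ) = 4*k*s + 3*t := by exact_mod_cast h2
    have hdvd : (4:ℤ) ∣ 3*(t:ℤ) := ⟨n*t - k*s, by linarith [h3]⟩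
    have hdvdn : 4 ∣ 3*t := by exact_mod_cast hdvd
    exact h4 ((Nat.Coprime.dvd_of_dvd_mul_left (by decide) hdvdn))
  have per : ∀ k : ℕ, Real.sin (π * k * ((s:ℝ)/t) + 3*π/4)
      = Real.sin (π * ((k % (2*t) : ℕ) : ℝ) * ((s:ℝ)/t) + 3*π/4) := by
    intro k
    obtain ⟨m, q, hm, rfl⟩ : ∃ m q, m = (m + 2*t*q) % (2*t) ∧ k = m + 2*t*q :=
      ⟨k % (2*t), k / (2*t), by rw [Nat.add_mul_mod_self_left, Nat.mod_mod_of_dvd _ dvd_rfl], (Nat.mod_add_div k (2*t)).symm⟩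
    rw [← hm]
    have : π * ((m + 2*t*q : ℕ) : ℝ) * ((s:ℝ)/t) + 3*π/4
        = (π * (m : ℝ) * ((s:ℝ)/t) + 3*π/4) + ((s * q : ℕ) : ℤ) * (2*π) := by
      push_cast
      field_simp
      ring
    rw [this, Real.sin_add_int_mul_two_pi]
  have h2t : 0 < 2*t := by omega
  have hne : (Finset.range (2*t)).Nonempty := ⟨0, Finset.mem_range.mpr h2t⟩
  refine ⟨(Finset.range (2*t)).inf' hne
      (fun r => |Real.sin (π * r * ((s:ℝ)/t) + 3*π/4)|), ?_, ?_⟩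
  · rw [gt_iff_lt, Finset.lt_inf'_iff]
    intro r _
    exact abs_pos.mpr (key r)
  · intro k _
    have hle : (Finset.range (2*t)).inf' hne
        (fun r => |Real.sin (π * r * ((s:ℝ)/t) + 3*π/4)|)
        ≤ |Real.sin (π * ((k % (2*t) : ℕ) : ℝ) * ((s:ℝ)/t) + 3*π/4)| :=
      Finset.inf'_le _ (Finset.mem_range.mpr (Nat.mod_lt k h2t))
    calc _ ≤ |Real.sin (π * ((k % (2*t) : ℕ) : ℝ) * ((s:ℝ)/t) + 3*π/4)| := hle
      _ = _ := by rw [← per k]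
end

section
/- Let τ > 0 be an irrational real number and suppose there exist δ > 0 and 0 < ε < 1 such that for all integers s and positive integers q, |τ − s/q| ≥ δ/q^{2+ε}. Then there exists N > 0 such that for all positive integers k, |sin(πkτ)| ≥ N/k^{1+ε}. -/
open Real

/-! With `s` the integer nearest to `k τ`, the Diophantine bound at `s / k` gives
`|k τ - s| ≥ δ / k ^ (1 + ε)`, while `|sin (π k τ)| = |sin (π (k τ - s))| ≥ 2 |k τ - s|`
by Jordan's inequality, since `|k τ - s| ≤ 1 / 2`. -/

lemma abs_sin_add_int_mul_pi (x : ℝ) (n : ℤ) : |sin (x + n * π)| = |sin x| := by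
  rw [sin_add_int_mul_pi, abs_mul, abs_neg_one_zpow, one_mul]

lemma two_mul_abs_sub_round_le_abs_sin_pi_mul (x : ℝ) :
    2 * |x - round x| ≤ |sin (π * x)| := by
  have hround : |x - round x| ≤ 1 / 2 := abs_sub_round x
  have hπ : |π * (x - round x)| ≤ π / 2 := by
    rw [abs_mul, abs_of_pos pi_pos]
    nlinarith [pi_pos]
  calc 2 * |x - round x| = 2 / π * |π * (x - round x)| := by
        rw [abs_mul, abs_of_pos pi_pos]; field_simp
    _ ≤ |sin (π * (x - round x))| := mul_abs_le_abs_sin hπ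
    _ = |sin (π * x)| := by
        rw [← abs_sin_add_int_mul_pi _ (round x)]; ring_nf

lemma abs_nat_mul_sub_int_eq (τ : ℝ) (s : ℤ) {q : ℕ} (hq : 0 < q) :
    |q * τ - s| = q * |τ - s / q| := by
  have hq' : (0 : ℝ) < q := Nat.cast_pos.mpr hq
  rw [← abs_of_pos hq', ← abs_mul, abs_of_pos hq', mul_sub, mul_div_cancel₀ _ hq'.ne']

lemma div_rpow_le_abs_nat_mul_sub_round {τ δ ε : ℝ}
    (hdio : ∀ s : ℤ, ∀ q : ℕ, 0 < q → δ / (q : ℝ) ^ (2 + ε) ≤ |τ - (s : ℝ) / q|)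
    {q : ℕ} (hq : 0 < q) :
    δ / (q : ℝ) ^ (1 + ε) ≤ |q * τ - round (q * τ)| := by
  have hq' : (0 : ℝ) < q := Nat.cast_pos.mpr hq
  have hpow : (q : ℝ) ^ (2 + ε) = q * (q : ℝ) ^ (1 + ε) := by
    rw [show (2 : ℝ) + ε = 1 + (1 + ε) by ring, rpow_add hq', rpow_one]
  calc δ / (q : ℝ) ^ (1 + ε) = q * (δ / (q : ℝ) ^ (2 + ε)) := by
        rw [hpow]; field_simp
    _ ≤ q * |τ - round (q * τ) / q| := by gcongr; exact hdio _ q hq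
    _ = |q * τ - round (q * τ)| := (abs_nat_mul_sub_int_eq τ _ hq).symm

theorem stmt7_general (τ : ℝ) (δ ε : ℝ)
    (hδ : 0 < δ)
    (hdio : ∀ s : ℤ, ∀ q : ℕ, 0 < q → δ / (q : ℝ) ^ (2 + ε) ≤ |τ - (s : ℝ) / q|) :
    ∃ N > (0 : ℝ), ∀ k : ℕ, 0 < k → N / (k : ℝ) ^ (1 + ε) ≤ |Real.sin (π * k * τ)| := by
  refine ⟨2 * δ, by positivity, fun k hk => ?_⟩
  calc 2 * δ / (k : ℝ) ^ (1 + ε) = 2 * (δ / (k : ℝ) ^ (1 + ε)) := mul_div_assoc _ _ _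
    _ ≤ 2 * |k * τ - round (k * τ)| := by
        gcongr; exact div_rpow_le_abs_nat_mul_sub_round hdio hk
    _ ≤ |sin (π * (k * τ))| := two_mul_abs_sub_round_le_abs_sin_pi_mul _
    _ = |Real.sin (π * k * τ)| := by rw [mul_assoc]

theorem stmt7 (τ : ℝ) (hpos : 0 < τ) (hirr : Irrational τ) (δ ε : ℝ)
    (hδ : 0 < δ) (hε0 : 0 < ε) (hε1 : ε < 1)
    (hdio : ∀ s : ℤ, ∀ q : ℕ, 0 < q → δ / (q : ℝ) ^ (2 + ε) ≤ |τ - (s : ℝ) / q|) :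
    ∃ N > (0 : ℝ), ∀ k : ℕ, 0 < k → N / (k : ℝ) ^ (1 + ε) ≤ |Real.sin (π * k * τ)| :=
  stmt7_general τ δ ε hδ hdio
end

section
/- Let τ > 0 be irrational and satisfy |τ − s/q| ≥ δ/q^{2+ε} for all integers s and positive integers q, with δ > 0 and 0 < ε < 1. Then there exists N > 0 such that |sin(πkτ + π/2)| ≥ N/k^{1+ε} for all positive integers k. -/
/-!
Let `m + 1/2` be a half-integer nearest to `kτ` and `y = kτ - (m + 1/2)`. Then
`|cos (πkτ)| = |sin (πy)| ≥ 2|y|` by Jordan's inequality, and `|y| = k |τ - (2m+1)/(2k)|`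
is bounded below by the Diophantine condition at the denominator `2k`.
-/

open Real

theorem abs_cos_pi_mul_eq_abs_sin (x : ℝ) (m : ℤ) :
    |cos (π * x)| = |sin (π * (x - (m + 1 / 2)))| := by
  have : π * (x - (m + 1 / 2)) = π * x - π / 2 - m * π := by ring
  rw [this, sin_sub_int_mul_pi, sin_sub_pi_div_two, abs_mul, abs_neg_one_zpow, abs_neg, one_mul]

theorem two_mul_abs_sub_le_abs_cos_pi_mul {x : ℝ} {m : ℤ} (h : |x - (m + 1 / 2)| ≤ 1 / 2) :
    2 * |x - (m + 1 / 2)| ≤ |cos (π * x)| := by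
  set y := x - (m + 1 / 2)
  have hπy : |π * y| = π * |y| := by rw [abs_mul, abs_of_pos pi_pos]
  have hle : |π * y| ≤ π / 2 := by rw [hπy]; nlinarith [pi_pos]
  calc 2 * |y| = 2 / π * |π * y| := by rw [hπy]; field_simp
    _ ≤ |sin (π * y)| := mul_abs_le_abs_sin hle
    _ = |cos (π * x)| := (abs_cos_pi_mul_eq_abs_sin x m).symm

theorem exists_abs_sub_half_le (x : ℝ) : ∃ m : ℤ, |x - (m + 1 / 2)| ≤ 1 / 2 := by
  refine ⟨⌊x⌋, abs_le.2 ⟨?_, ?_⟩⟩ <;> linarith [Int.floor_le x, Int.lt_floor_add_one x]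

theorem rpow_two_add_le_mul_rpow_one_add {k ε : ℝ} (hk : 0 < k) (hε : ε ≤ 1) :
    (2 * k) ^ (2 + ε) ≤ 8 * (k * k ^ (1 + ε)) := by
  have h8 : (2 : ℝ) ^ (2 + ε) ≤ 8 := by
    calc (2 : ℝ) ^ (2 + ε) ≤ 2 ^ (3 : ℝ) := rpow_le_rpow_of_exponent_le one_le_two (by linarith)
      _ = 8 := by norm_num
  have hk' : k ^ (2 + ε) = k * k ^ (1 + ε) := by
    rw [show 2 + ε = 1 + (1 + ε) by ring, rpow_add hk, rpow_one]
  rw [mul_rpow zero_le_two hk.le, hk']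
  exact mul_le_mul_of_nonneg_right h8 (by positivity)

theorem div_le_abs_mul_sub_half {τ δ ε : ℝ} (hδ : 0 ≤ δ) (hε : ε ≤ 1)
    (hdio : ∀ s : ℤ, ∀ q : ℕ, 0 < q → δ / (q : ℝ) ^ (2 + ε) ≤ |τ - (s : ℝ) / q|)
    {k : ℕ} (hk : 0 < k) (m : ℤ) :
    δ / (8 * (k : ℝ) ^ (1 + ε)) ≤ |k * τ - (m + 1 / 2)| := by
  have hk0 : (0 : ℝ) < k := by exact_mod_cast hk
  have hq := hdio (2 * m + 1) (2 * k) (by omega)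
  push_cast at hq
  have hdist : |k * τ - (m + 1 / 2)| = k * |τ - (2 * m + 1) / (2 * k)| := by
    rw [← abs_of_pos hk0, ← abs_mul, abs_of_pos hk0]
    congr 1
    field_simp
  calc δ / (8 * (k : ℝ) ^ (1 + ε)) = k * (δ / (8 * (k * (k : ℝ) ^ (1 + ε)))) := by field_simp
    _ ≤ k * (δ / (2 * k) ^ (2 + ε)) := by
      gcongr
      exact rpow_two_add_le_mul_rpow_one_add hk0 hε
    _ ≤ |k * τ - (m + 1 / 2)| := by rw [hdist]; gcongr

theorem stmt8_general (τ : ℝ) (δ ε : ℝ)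
    (hδ : 0 < δ) (hε1 : ε < 1)
    (hdio : ∀ s : ℤ, ∀ q : ℕ, 0 < q → δ / (q : ℝ) ^ (2 + ε) ≤ |τ - (s : ℝ) / q|) :
    ∃ N > (0 : ℝ), ∀ k : ℕ, 0 < k →
      N / (k : ℝ) ^ (1 + ε) ≤ |Real.sin (π * k * τ + π / 2)| := by
  refine ⟨δ / 4, by positivity, fun k hk => ?_⟩
  obtain ⟨m, hm⟩ := exists_abs_sub_half_le (k * τ)
  have hsin : sin (π * k * τ + π / 2) = cos (π * (k * τ)) := by
    rw [sin_add_pi_div_two, mul_assoc]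
  calc δ / 4 / (k : ℝ) ^ (1 + ε) = 2 * (δ / (8 * (k : ℝ) ^ (1 + ε))) := by ring
    _ ≤ 2 * |k * τ - (m + 1 / 2)| := by gcongr; exact div_le_abs_mul_sub_half hδ.le hε1.le hdio hk m
    _ ≤ |sin (π * k * τ + π / 2)| := hsin ▸ two_mul_abs_sub_le_abs_cos_pi_mul hm

theorem stmt8 (τ : ℝ) (hpos : 0 < τ) (hirr : Irrational τ) (δ ε : ℝ)
    (hδ : 0 < δ) (hε0 : 0 < ε) (hε1 : ε < 1)
    (hdio : ∀ s : ℤ, ∀ q : ℕ, 0 < q → δ / (q : ℝ) ^ (2 + ε) ≤ |τ - (s : ℝ) / q|) :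
    ∃ N > (0 : ℝ), ∀ k : ℕ, 0 < k →
      N / (k : ℝ) ^ (1 + ε) ≤ |Real.sin (π * k * τ + π / 2)| :=
  stmt8_general τ δ ε hδ hε1 hdio
end

section
/- For m a positive integer, with θ_j = π(1 + 2j)/(4m) (j = 0,…,m−1) and δ ∈ {1, 2}, the determinant of the 2m × 2m matrix with rows indexed j = 0,…,2m−1 and columns alternating between cos(jδθ_p) and sin(jδθ_p) for p = 0,…,m−1 equals (1/2^m)·∏_{j=0}^{m−1}(2 sin δθ_j)·∏_{0≤s<j≤m−1} 4(1 − cos δ(θ_j − θ_s))(1 − cos δ(θ_j + θ_s)) up to sign, and in particular is nonzero. -/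
/-!
With `z_p = e^{iφ_p}`, the column pair `(cos jφ_p, sin jφ_p)` is `(z_p^j, z̄_p^j)` times a fixed
`2 × 2` matrix of determinant `i/2`, so the determinant is `(i/2)^m` times the Vandermonde
determinant of the nodes `z_0, z̄_0, z_1, z̄_1, …`. Its factors group by pairs of nodes:
`z̄_p - z_p = -2i sin φ_p`, and
`|z_p - z_s|² |z_p - z̄_s|² = 4(1 - cos(φ_p - φ_s))(1 - cos(φ_p + φ_s))`.
For distinct `φ_p ∈ (0, π)`, as `δθ_p` are, none of these factors vanishes.
-/

open Real Matrix Finset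

section Products

variable {M : Type*} [CommMonoid M]

theorem Finset.prod_range_two_mul (f : ℕ → M) (n : ℕ) :
    ∏ i ∈ range (2 * n), f i = ∏ q ∈ range n, (f (2 * q) * f (2 * q + 1)) := by
  induction n with
  | zero => simp
  | succ n ih => rw [Nat.mul_succ, prod_range_succ, prod_range_succ, ih, prod_range_succ, mul_assoc]

theorem Fin.prod_univ_prod_Ioi_eq_prod_range (F : ℕ → ℕ → M) (n : ℕ) :
    ∏ i : Fin n, ∏ j ∈ Ioi i, F i j = ∏ j ∈ range n, ∏ i ∈ range j, F i j := by
  rw [prod_comm' (t' := univ) (s' := fun j => Iio j) (by simp), ← Fin.prod_univ_eq_prod_range]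
  refine prod_congr rfl fun j _ => ?_
  rw [← Nat.Iio_eq_range, ← Fin.map_valEmbedding_Iio, prod_map]
  rfl

end Products

theorem Matrix.det_vandermonde_eq_prod_range {R : Type*} [CommRing R] (v : ℕ → R) (n : ℕ) :
    (vandermonde fun i : Fin n => v i).det = ∏ j ∈ range n, ∏ i ∈ range j, (v j - v i) := by
  rw [det_vandermonde]
  exact Fin.prod_univ_prod_Ioi_eq_prod_range (fun i j => v j - v i) n

theorem prod_range_prod_range_sub_interleave {R : Type*} [CommRing R] (w : ℕ → R) (n : ℕ) :
    ∏ j ∈ range (2 * n), ∏ i ∈ range j, (w j - w i) =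
      ∏ q ∈ range n, ((w (2 * q + 1) - w (2 * q)) *
        ∏ r ∈ range q, ((w (2 * q) - w (2 * r)) * (w (2 * q + 1) - w (2 * r + 1)) *
          ((w (2 * q) - w (2 * r + 1)) * (w (2 * q + 1) - w (2 * r))))) := by
  induction n with
  | zero => simp
  | succ n ih =>
    rw [Nat.mul_succ, prod_range_succ, prod_range_succ, ih, prod_range_succ (n := 2 * n),
      prod_range_succ, prod_range_two_mul (fun i => w (2 * n) - w i),
      prod_range_two_mul (fun i => w (2 * n + 1) - w i)]
    simp only [prod_mul_distrib]
    ring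

namespace Complex

theorem exp_mul_I_sub_mul_exp_neg_mul_I_sub (x y : ℝ) :
    (exp (x * I) - exp (y * I)) * (exp (-(x * I)) - exp (-(y * I))) =
      ((2 * (1 - Real.cos (x - y)) : ℝ) : ℂ) := by
  have hx := exp_ne_zero (x * I)
  have hy := exp_ne_zero (y * I)
  push_cast
  simp only [Complex.cos, neg_mul, exp_neg, sub_mul, exp_sub]
  field_simp
  ring

theorem exp_neg_mul_I_sub_exp_mul_I (x : ℝ) :
    exp (-(x * I)) - exp (x * I) = -I * ((2 * Real.sin x : ℝ) : ℂ) := by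
  push_cast
  simp only [Complex.sin, neg_mul]
  linear_combination (exp (-(x * I)) - exp (x * I)) * I_sq

theorem cos_nat_mul_eq (n : ℕ) (z : ℂ) :
    cos (n * z) = (exp (z * I) ^ n + exp (-(z * I)) ^ n) / 2 := by
  rw [← exp_nat_mul, ← exp_nat_mul, Complex.cos]
  ring_nf

theorem sin_nat_mul_eq (n : ℕ) (z : ℂ) :
    sin (n * z) = (exp (-(z * I)) ^ n - exp (z * I) ^ n) * I / 2 := by
  rw [← exp_nat_mul, ← exp_nat_mul, Complex.sin]
  ring_nf

end Complex

open Complex (exp I)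

def parityEquiv (m : ℕ) : Fin (2 * m) ≃ Fin 2 × Fin m where
  toFun c := (⟨c % 2, by omega⟩, ⟨c / 2, by omega⟩)
  invFun p := ⟨2 * p.2 + p.1, by omega⟩
  left_inv c := by ext; simp only; omega
  right_inv p := by ext <;> simp only <;> omega

@[simp]
theorem parityEquiv_symm_apply_val {m : ℕ} (p : Fin 2 × Fin m) :
    ((parityEquiv m).symm p : ℕ) = 2 * p.2 + p.1 := rfl

noncomputable def trigVandermonde (m : ℕ) (φ : ℕ → ℝ) : Matrix (Fin (2 * m)) (Fin (2 * m)) ℝ :=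
  Matrix.of fun j c =>
    if (c : ℕ) % 2 = 0 then Real.cos ((j : ℕ) * φ ((c : ℕ) / 2))
    else Real.sin ((j : ℕ) * φ ((c : ℕ) / 2))

noncomputable def trigNode (φ : ℕ → ℝ) (c : ℕ) : ℂ :=
  if c % 2 = 0 then exp (φ (c / 2) * I) else exp (-(φ (c / 2) * I))

@[simp]
theorem trigNode_two_mul (φ : ℕ → ℝ) (q : ℕ) : trigNode φ (2 * q) = exp (φ q * I) := by
  simp [trigNode]

@[simp]
theorem trigNode_two_mul_add_one (φ : ℕ → ℝ) (q : ℕ) :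
    trigNode φ (2 * q + 1) = exp (-(φ q * I)) := by
  simp [trigNode, Nat.add_mod, show (2 * q + 1) / 2 = q by omega]

noncomputable def cosSinBlock : Matrix (Fin 2) (Fin 2) ℂ := !![1 / 2, -(I / 2); 1 / 2, I / 2]

theorem det_cosSinBlock : cosSinBlock.det = I / 2 := by
  rw [cosSinBlock, det_fin_two_of]
  ring

theorem trigVandermonde_map_ofReal (m : ℕ) (φ : ℕ → ℝ) :
    (trigVandermonde m φ).map ((↑) : ℝ → ℂ) =
      (vandermonde fun c : Fin (2 * m) => trigNode φ c)ᵀ *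
        (blockDiagonal fun _ : Fin m => cosSinBlock).submatrix (parityEquiv m) (parityEquiv m) := by
  ext j c
  obtain ⟨⟨a, q⟩, rfl⟩ := (parityEquiv m).symm.surjective c
  rw [mul_apply, ← (parityEquiv m).symm.sum_comp]
  simp only [map_apply, transpose_apply, vandermonde_apply, submatrix_apply,
    Equiv.apply_symm_apply, blockDiagonal_apply, Fintype.sum_prod_type, mul_ite, mul_zero,
    sum_ite_eq', mem_univ, if_true, Fin.sum_univ_two, parityEquiv_symm_apply_val, Fin.val_zero,
    Fin.val_one, add_zero, trigNode_two_mul, trigNode_two_mul_add_one, trigVandermonde, of_apply]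
  fin_cases a
  · simp only [add_zero, Nat.mul_mod_right, ↓reduceIte, ne_eq, OfNat.ofNat_ne_zero,
      not_false_eq_true, mul_div_cancel_left₀, Complex.ofReal_cos, Complex.ofReal_mul,
      Complex.ofReal_natCast, Complex.cos_nat_mul_eq, cosSinBlock, Fin.zero_eta, of_apply,
      cons_val', cons_val_zero, cons_val_fin_one, cons_val_one]
    ring
  · simp only [Nat.add_mod, Nat.mul_mod_right, Nat.mod_succ, zero_add, one_ne_zero, ↓reduceIte,
      show (2 * (q : ℕ) + 1) / 2 = q by omega, Complex.ofReal_sin, Complex.ofReal_mul,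
      Complex.ofReal_natCast, Complex.sin_nat_mul_eq, cosSinBlock, Fin.mk_one, of_apply, cons_val',
      cons_val_one, cons_val_fin_one, cons_val_zero]
    ring

theorem det_trigVandermonde (m : ℕ) (φ : ℕ → ℝ) :
    (trigVandermonde m φ).det = 1 / 2 ^ m * (∏ j ∈ range m, 2 * Real.sin (φ j)) *
      ∏ j ∈ range m, ∏ s ∈ range j,
        4 * (1 - Real.cos (φ j - φ s)) * (1 - Real.cos (φ j + φ s)) := by
  apply Complex.ofReal_injective
  have hpair (q : ℕ) : trigNode φ (2 * q + 1) - trigNode φ (2 * q) =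
      -I * ((2 * Real.sin (φ q) : ℝ) : ℂ) := by
    rw [trigNode_two_mul, trigNode_two_mul_add_one, Complex.exp_neg_mul_I_sub_exp_mul_I]
  have hquad (q r : ℕ) :
      (trigNode φ (2 * q) - trigNode φ (2 * r)) *
          (trigNode φ (2 * q + 1) - trigNode φ (2 * r + 1)) *
        ((trigNode φ (2 * q) - trigNode φ (2 * r + 1)) *
          (trigNode φ (2 * q + 1) - trigNode φ (2 * r))) =
        ((4 * (1 - Real.cos (φ q - φ r)) * (1 - Real.cos (φ q + φ r)) : ℝ) : ℂ) := by
    have hsum := Complex.exp_mul_I_sub_mul_exp_neg_mul_I_sub (φ q) (-φ r)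
    simp only [Complex.ofReal_neg, neg_mul, neg_neg, sub_neg_eq_add] at hsum
    rw [trigNode_two_mul, trigNode_two_mul_add_one, trigNode_two_mul, trigNode_two_mul_add_one,
      Complex.exp_mul_I_sub_mul_exp_neg_mul_I_sub, hsum]
    push_cast
    ring
  have hI : -I * (I / 2) = 1 / 2 := by linear_combination (-1 / 2 : ℂ) * Complex.I_sq
  calc ((trigVandermonde m φ).det : ℂ) = ((trigVandermonde m φ).map ((↑) : ℝ → ℂ)).det :=
        RingHom.map_det Complex.ofRealHom _
    _ = (∏ q ∈ range m, (-I * ((2 * Real.sin (φ q) : ℝ) : ℂ) *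
          ∏ r ∈ range q, ((4 * (1 - Real.cos (φ q - φ r)) * (1 - Real.cos (φ q + φ r)) : ℝ) : ℂ))) *
          (I / 2) ^ #(range m) := by
        rw [trigVandermonde_map_ofReal, det_mul, det_transpose, det_vandermonde_eq_prod_range,
          prod_range_prod_range_sub_interleave, det_submatrix_equiv_self, det_blockDiagonal]
        simp only [hquad, hpair, det_cosSinBlock, prod_const, card_univ, Fintype.card_fin,
          card_range]
    _ = ∏ q ∈ range m, ((1 / 2 * (2 * Real.sin (φ q)) *
          ∏ r ∈ range q, 4 * (1 - Real.cos (φ q - φ r)) * (1 - Real.cos (φ q + φ r)) : ℝ) : ℂ) := by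
        rw [prod_mul_pow_card]
        refine prod_congr rfl fun q _ => ?_
        rw [mul_right_comm, mul_right_comm (-I), hI]
        push_cast
        ring
    _ = _ := by
        rw [← Complex.ofReal_prod, prod_mul_distrib, prod_mul_distrib, prod_const, card_range,
          _root_.one_div_pow]

theorem Real.one_sub_cos_ne_zero {x : ℝ} (hx₀ : x ≠ 0) (hx₁ : -(2 * π) < x) (hx₂ : x < 2 * π) :
    1 - Real.cos x ≠ 0 :=
  sub_ne_zero.2 fun h => hx₀ ((cos_eq_one_iff_of_lt_of_lt hx₁ hx₂).1 h.symm)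

theorem det_trigVandermonde_ne_zero {m : ℕ} {φ : ℕ → ℝ}
    (hφ : Set.MapsTo φ (Set.Iio m) (Set.Ioo 0 π)) (hinj : Set.InjOn φ (Set.Iio m)) :
    (trigVandermonde m φ).det ≠ 0 := by
  rw [det_trigVandermonde]
  refine mul_ne_zero (mul_ne_zero (by positivity) ?_) ?_
  · refine prod_ne_zero_iff.2 fun j hj => mul_ne_zero two_ne_zero ?_
    obtain ⟨hj₀, hjπ⟩ := hφ (mem_range.1 hj)
    exact (sin_pos_of_pos_of_lt_pi hj₀ hjπ).ne'
  · refine prod_ne_zero_iff.2 fun j hj => prod_ne_zero_iff.2 fun s hs => ?_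
    have hsj := mem_range.1 hs
    have hjm : j ∈ Set.Iio m := mem_range.1 hj
    have hsm : s ∈ Set.Iio m := hsj.trans hjm
    obtain ⟨hj₀, hjπ⟩ := hφ hjm
    obtain ⟨hs₀, hsπ⟩ := hφ hsm
    have hne : φ j - φ s ≠ 0 := sub_ne_zero.2 fun h => hsj.ne' (hinj hjm hsm h)
    refine mul_ne_zero (mul_ne_zero four_ne_zero (one_sub_cos_ne_zero hne ?_ ?_))
      (one_sub_cos_ne_zero (by positivity) ?_ ?_) <;> linarith

theorem stmt11_general (m : ℕ) (δ : ℕ) (hδ : δ = 1 ∨ δ = 2) (θ : ℕ → ℝ)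
    (hθ : ∀ p, θ p = π * (1 + 2 * p) / (4 * m)) :
    ((Matrix.of fun j c : Fin (2 * m) =>
        if (c : ℕ) % 2 = 0 then Real.cos ((j : ℕ) * (δ * θ ((c : ℕ) / 2)))
        else Real.sin ((j : ℕ) * (δ * θ ((c : ℕ) / 2)))).det =
        (1 / 2 ^ m) * (∏ j ∈ Finset.range m, (2 * Real.sin (δ * θ j))) *
          ∏ j ∈ Finset.range m, ∏ s ∈ Finset.range j,
            4 * (1 - Real.cos (δ * (θ j - θ s))) * (1 - Real.cos (δ * (θ j + θ s))) ∨
     (Matrix.of fun j c : Fin (2 * m) =>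
        if (c : ℕ) % 2 = 0 then Real.cos ((j : ℕ) * (δ * θ ((c : ℕ) / 2)))
        else Real.sin ((j : ℕ) * (δ * θ ((c : ℕ) / 2)))).det =
        -((1 / 2 ^ m) * (∏ j ∈ Finset.range m, (2 * Real.sin (δ * θ j))) *
          ∏ j ∈ Finset.range m, ∏ s ∈ Finset.range j,
            4 * (1 - Real.cos (δ * (θ j - θ s))) * (1 - Real.cos (δ * (θ j + θ s))))) ∧
    (Matrix.of fun j c : Fin (2 * m) =>
        if (c : ℕ) % 2 = 0 then Real.cos ((j : ℕ) * (δ * θ ((c : ℕ) / 2)))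
        else Real.sin ((j : ℕ) * (δ * θ ((c : ℕ) / 2)))).det ≠ 0 := by
  have hdet := det_trigVandermonde m fun p => δ * θ p
  simp only [← mul_sub, ← mul_add] at hdet
  have hδ₀ : (0 : ℝ) < δ := by rcases hδ with rfl | rfl <;> norm_num
  have hδ₂ : (δ : ℝ) ≤ 2 := by rcases hδ with rfl | rfl <;> norm_num
  have hφ : Set.MapsTo (fun p => δ * θ p) (Set.Iio m) (Set.Ioo 0 π) := by
    intro p (hp : p < m)
    have hp' : (p : ℝ) + 1 ≤ m := by exact_mod_cast hp
    have hlt : (δ : ℝ) * (1 + 2 * p) < 4 * m := by nlinarith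
    show 0 < δ * θ p ∧ δ * θ p < π
    rw [hθ, mul_div_assoc']
    exact ⟨div_pos (mul_pos hδ₀ (by positivity)) (by linarith),
      (div_lt_iff₀ (by linarith)).2 (by nlinarith [pi_pos])⟩
  have hinj : Set.InjOn (fun p => δ * θ p) (Set.Iio m) := by
    intro p (hp : p < m) q _ h
    have hm : (0 : ℝ) < m := by exact_mod_cast (Nat.zero_lt_of_lt hp)
    simp only [hθ] at h
    field_simp at h
    exact_mod_cast (by linarith : (p : ℝ) = q)
  have hne := det_trigVandermonde_ne_zero hφ hinj
  exact ⟨Or.inl hdet, hne⟩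

theorem stmt11 (m : ℕ) (hm : 0 < m) (δ : ℕ) (hδ : δ = 1 ∨ δ = 2) (θ : ℕ → ℝ)
    (hθ : ∀ p, θ p = π * (1 + 2 * p) / (4 * m)) :
    ((Matrix.of fun j c : Fin (2 * m) =>
        if (c : ℕ) % 2 = 0 then Real.cos ((j : ℕ) * (δ * θ ((c : ℕ) / 2)))
        else Real.sin ((j : ℕ) * (δ * θ ((c : ℕ) / 2)))).det =
        (1 / 2 ^ m) * (∏ j ∈ Finset.range m, (2 * Real.sin (δ * θ j))) *
          ∏ j ∈ Finset.range m, ∏ s ∈ Finset.range j,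
            4 * (1 - Real.cos (δ * (θ j - θ s))) * (1 - Real.cos (δ * (θ j + θ s))) ∨
     (Matrix.of fun j c : Fin (2 * m) =>
        if (c : ℕ) % 2 = 0 then Real.cos ((j : ℕ) * (δ * θ ((c : ℕ) / 2)))
        else Real.sin ((j : ℕ) * (δ * θ ((c : ℕ) / 2)))).det =
        -((1 / 2 ^ m) * (∏ j ∈ Finset.range m, (2 * Real.sin (δ * θ j))) *
          ∏ j ∈ Finset.range m, ∏ s ∈ Finset.range j,
            4 * (1 - Real.cos (δ * (θ j - θ s))) * (1 - Real.cos (δ * (θ j + θ s))))) ∧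
    (Matrix.of fun j c : Fin (2 * m) =>
        if (c : ℕ) % 2 = 0 then Real.cos ((j : ℕ) * (δ * θ ((c : ℕ) / 2)))
        else Real.sin ((j : ℕ) * (δ * θ ((c : ℕ) / 2)))).det ≠ 0 :=
  stmt11_general m δ hδ θ hθ
end
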